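/- arXiv:2605.08345 — 5 statements merged into one kernel-verified Lean document; each statement's English description precedes it below -/
import Mathlib

section
/- Let n ≥ 1 and for each i ∈ {1,…,n} let d0_i > d1_i > 0 be real numbers; set ε_i = d1_i/(d0_i − d1_i) and d̲ = min_{1≤i≤n} d1_i. Given initial vectors y¹, z¹, y², z² ∈ ℝ^n, define for k ∈ {1,2} and each i: Y^k_i(t) = y^k_i·e^{−d0_i·t} and Z^k_i(t) = z^k_i·e^{−d1_i·t} + ε_i·y^k_i·(e^{−d1_i·t} − e^{−d0_i·t}). Then for all t ≥ 0: Σ_{i=1}^n |Z¹_i(t) − Z²_i(t)| + Σ_{i=1}^n ε_i·|Y¹_i(t) − Y²_i(t)| ≤ e^{−d̲·t}·( Σ_{i=1}^n |z¹_i − z²_i| + Σ_{i=1}^n ε_i·|y¹_i − y²_i| ). -/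
/-- contraction of the weighted distance along the deterministic flow. -/
theorem weighted_distance_contraction (n : ℕ) (hn : 1 ≤ n)
    (d0 d1 ε : Fin n → ℝ) (dmin : ℝ)
    (hd1 : ∀ i, 0 < d1 i) (hd01 : ∀ i, d1 i < d0 i)
    (hε : ∀ i, ε i = d1 i / (d0 i - d1 i))
    (hmem : ∃ i, dmin = d1 i) (hle : ∀ i, dmin ≤ d1 i)
    (y1 z1 y2 z2 : Fin n → ℝ)
    (Y1 Z1 Y2 Z2 : Fin n → ℝ → ℝ)
    (hY1 : ∀ i t, Y1 i t = y1 i * Real.exp (-d0 i * t))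
    (hY2 : ∀ i t, Y2 i t = y2 i * Real.exp (-d0 i * t))
    (hZ1 : ∀ i t, Z1 i t = z1 i * Real.exp (-d1 i * t)
        + ε i * y1 i * (Real.exp (-d1 i * t) - Real.exp (-d0 i * t)))
    (hZ2 : ∀ i t, Z2 i t = z2 i * Real.exp (-d1 i * t)
        + ε i * y2 i * (Real.exp (-d1 i * t) - Real.exp (-d0 i * t))) :
    ∀ t ≥ (0 : ℝ),
      (∑ i, |Z1 i t - Z2 i t|) + (∑ i, ε i * |Y1 i t - Y2 i t|) ≤
        Real.exp (-dmin * t) *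
          ((∑ i, |z1 i - z2 i|) + (∑ i, ε i * |y1 i - y2 i|)) := by
  intro t ht
  rw [← Finset.sum_add_distrib, ← Finset.sum_add_distrib, Finset.mul_sum]
  apply Finset.sum_le_sum
  intro i _
  have hε0 : 0 ≤ ε i := by
    rw [hε i]
    exact div_nonneg (hd1 i).le (by linarith [hd01 i])
  set a := Real.exp (-d1 i * t) with ha
  set b := Real.exp (-d0 i * t) with hb
  set E := Real.exp (-dmin * t) with hE
  have hb0 : 0 < b := Real.exp_pos _
  have hba : b ≤ a := Real.exp_le_exp.2 (by nlinarith [hd01 i])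
  have haE : a ≤ E := Real.exp_le_exp.2 (by nlinarith [hle i])
  rw [hZ1, hZ2, hY1, hY2]
  have h1 : z1 i * a + ε i * y1 i * (a - b) - (z2 i * a + ε i * y2 i * (a - b))
      = (z1 i - z2 i) * a + (ε i * (y1 i - y2 i)) * (a - b) := by ring
  rw [h1]
  have h2 : |(z1 i - z2 i) * a + (ε i * (y1 i - y2 i)) * (a - b)|
      ≤ |z1 i - z2 i| * a + ε i * |y1 i - y2 i| * (a - b) := by
    calc |(z1 i - z2 i) * a + (ε i * (y1 i - y2 i)) * (a - b)|
        ≤ |(z1 i - z2 i) * a| + |(ε i * (y1 i - y2 i)) * (a - b)| := abs_add_le _ _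
      _ = |z1 i - z2 i| * a + ε i * |y1 i - y2 i| * (a - b) := by
          rw [abs_mul, abs_mul, abs_mul, abs_of_nonneg (by positivity : (0:ℝ) ≤ a),
            abs_of_nonneg hε0, abs_of_nonneg (by linarith : (0:ℝ) ≤ a - b)]
  have h3 : y1 i * b - y2 i * b = (y1 i - y2 i) * b := by ring
  rw [h3, abs_mul, abs_of_nonneg hb0.le]
  have habs1 : 0 ≤ |z1 i - z2 i| := abs_nonneg _
  have habs2 : 0 ≤ |y1 i - y2 i| := abs_nonneg _
  nlinarith [h2, mul_le_mul_of_nonneg_left haE habs1, mul_le_mul_of_nonneg_left haE (mul_nonneg hε0 habs2)]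
end

section
/- Let r, d, ℓ, u₀ > 0 and set ρ = r/d. Then exp( −r·∫₀ᵗ min(1, ℓ·u₀·e^{−d·s}) ds ) converges, as t → ∞, to φ(u₀), where φ(u₀) = e^{−ℓ·ρ·u₀} if ℓ·u₀ ≤ 1 and φ(u₀) = (ℓ·u₀)^{−ρ}·e^{−ρ} if ℓ·u₀ > 1. In particular φ(u₀) > 0, i.e. the total integrated jump rate ∫₀^∞ r·min(1, ℓ·u₀·e^{−d·s}) ds is finite. -/
open MeasureTheory Set Filter Real Topology

lemma exp_int_Ioi {d : ℝ} (hd : 0 < d) (a : ℝ) :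
    ∫ s in Set.Ioi a, Real.exp (-d * s) = Real.exp (-d * a) / d := by
  have h := integral_Ioi_of_hasDerivAt_of_tendsto
    (f := fun x => -Real.exp (-d * x) / d) (f' := fun x => Real.exp (-d * x))
    (a := a) (m := 0)
    ((Continuous.continuousWithinAt (by fun_prop)))
    (fun x _ => by
      have : HasDerivAt (fun x => -Real.exp (-d * x) / d)
          (-(Real.exp (-d * x) * -d) / d) x := by
        simpa using (((hasDerivAt_id x).const_mul (-d)).exp.neg).div_const d
      convert this using 1
      · rfl
      · rfl
      field_simp)
    (exp_neg_integrableOn_Ioi a hd)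
    (by
      have : Tendsto (fun x => -Real.exp (-d * x) / d) atTop (𝓝 (-0 / d)) := by
        refine Tendsto.div_const (Tendsto.neg ?_) _
        exact tendsto_exp_atBot.comp (tendsto_id.const_mul_atTop_of_neg (by linarith))
      simpa using this)
  rw [h]
  ring

/-- the survival function converges to a positive limit `φ(u₀)`,
i.e. the total integrated jump rate is finite. -/
theorem companion_no_jump_probability_positive
    (r d ℓ u₀ : ℝ) (hr : 0 < r) (hd : 0 < d) (hℓ : 0 < ℓ) (hu : 0 < u₀)
    (ρ : ℝ) (hρ : ρ = r / d) (φ : ℝ)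
    (hφ : φ = if ℓ * u₀ ≤ 1 then Real.exp (-(ℓ * ρ * u₀))
      else (ℓ * u₀) ^ (-ρ) * Real.exp (-ρ)) :
    Filter.Tendsto
      (fun t => Real.exp (-r * ∫ s in (0 : ℝ)..t, min 1 (ℓ * u₀ * Real.exp (-d * s))))
      Filter.atTop (nhds φ) ∧
    0 < φ ∧
    MeasureTheory.IntegrableOn
      (fun s => r * min 1 (ℓ * u₀ * Real.exp (-d * s))) (Set.Ioi 0) := by
  set c := ℓ * u₀ with hc
  have hcpos : 0 < c := mul_pos hℓ hu
  set g : ℝ → ℝ := fun s => min 1 (c * Real.exp (-d * s)) with hg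
  -- integrability of g
  have hgcont : Continuous g := by fun_prop
  have hgint : IntegrableOn g (Set.Ioi 0) := by
    refine Integrable.mono' ((exp_neg_integrableOn_Ioi 0 hd).const_mul c)
      hgcont.aestronglyMeasurable ?_
    filter_upwards with s
    rw [Real.norm_eq_abs, abs_of_nonneg (le_min one_pos.le (by positivity))]
    exact min_le_right _ _
  set I : ℝ := ∫ s in Set.Ioi 0, g s with hI
  -- convergence of interval integrals to I
  have htend : Tendsto (fun t => Real.exp (-r * ∫ s in (0:ℝ)..t, g s)) atTop
      (𝓝 (Real.exp (-r * I))) := by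
    have h1 : Tendsto (fun t => ∫ s in (0:ℝ)..t, g s) atTop (𝓝 I) :=
      intervalIntegral_tendsto_integral_Ioi 0 hgint tendsto_id
    exact (Real.continuous_exp.tendsto _).comp (h1.const_mul (-r))
  -- compute I
  have hIval : Real.exp (-r * I) = φ := by
    rcases le_or_gt c 1 with hc1 | hc1
    · -- c ≤ 1 : g = c * exp(-d s) on Ioi 0
      have heq : ∫ s in Set.Ioi 0, g s = ∫ s in Set.Ioi 0, c * Real.exp (-d * s) := by
        refine setIntegral_congr_fun measurableSet_Ioi fun s hs => ?_
        have hs0 : (0:ℝ) < s := hs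
        have : c * Real.exp (-d * s) ≤ 1 := by
          calc c * Real.exp (-d * s) ≤ c * 1 := by
                have : Real.exp (-d * s) ≤ 1 :=
                  Real.exp_le_one_iff.mpr (by nlinarith)
                nlinarith [Real.exp_pos (-d * s)]
            _ ≤ 1 := by linarith
        simp only [hg]
        exact min_eq_right this
      have : I = c / d := by
        rw [hI, heq, integral_const_mul, exp_int_Ioi hd]
        norm_num
        ring
      rw [hφ, if_pos hc1, this, hρ]
      congr 1
      rw [hc]
      ring
    · -- c > 1
      have hlog : 0 < Real.log c := Real.log_pos hc1
      set s₀ : ℝ := Real.log c / d with hs₀def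
      have hs₀pos : 0 < s₀ := div_pos hlog hd
      have hsplit : Set.Ioc 0 s₀ ∪ Set.Ioi s₀ = Set.Ioi 0 :=
        Set.Ioc_union_Ioi_eq_Ioi hs₀pos.le
      have hIsplit : I = (∫ s in Set.Ioc 0 s₀, g s) + ∫ s in Set.Ioi s₀, g s := by
        rw [hI, ← hsplit, setIntegral_union (Set.Ioc_disjoint_Ioi le_rfl)
          measurableSet_Ioi
          (hgint.mono_set (by rw [← hsplit]; exact Set.subset_union_left))
          (hgint.mono_set (by rw [← hsplit]; exact Set.subset_union_right))]
      have h1 : (∫ s in Set.Ioc 0 s₀, g s) = s₀ := by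
        have heq : ∫ s in Set.Ioc 0 s₀, g s = ∫ _ in Set.Ioc 0 s₀, (1:ℝ) := by
          refine setIntegral_congr_fun measurableSet_Ioc fun s hs => ?_
          have hle : 1 ≤ c * Real.exp (-d * s) := by
            have h2 : Real.exp (-Real.log c) ≤ Real.exp (-d * s) := by
              apply Real.exp_le_exp.mpr
              have : d * s ≤ Real.log c := by
                have := hs.2
                rw [hs₀def] at this
                calc d * s ≤ d * (Real.log c / d) := by nlinarith
                  _ = Real.log c := by field_simp
              linarith
            calc (1:ℝ) = c * Real.exp (-Real.log c) := by
                  rw [Real.exp_neg, Real.exp_log hcpos]; field_simp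
              _ ≤ c * Real.exp (-d * s) := by nlinarith [Real.exp_pos (-Real.log c)]
          simp only [hg]
          exact min_eq_left hle
        rw [heq]
        simp [Real.volume_Ioc, hs₀pos.le]
      have h2 : (∫ s in Set.Ioi s₀, g s) = 1 / d := by
        have heq : ∫ s in Set.Ioi s₀, g s = ∫ s in Set.Ioi s₀, c * Real.exp (-d * s) := by
          refine setIntegral_congr_fun measurableSet_Ioi fun s hs => ?_
          have hle : c * Real.exp (-d * s) ≤ 1 := by
            have h2 : Real.exp (-d * s) ≤ Real.exp (-Real.log c) := by
              apply Real.exp_le_exp.mpr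
              have hs' : s₀ < s := hs
              have : Real.log c ≤ d * s := by
                calc Real.log c = d * s₀ := by rw [hs₀def]; field_simp
                  _ ≤ d * s := by nlinarith
              linarith
            calc c * Real.exp (-d * s) ≤ c * Real.exp (-Real.log c) := by
                  nlinarith [Real.exp_pos (-d * s)]
              _ = 1 := by rw [Real.exp_neg, Real.exp_log hcpos]; field_simp
          simp only [hg]
          exact min_eq_right hle
        rw [heq, integral_const_mul, exp_int_Ioi hd]
        have : Real.exp (-d * s₀) = 1 / c := by
          rw [hs₀def]
          rw [show -d * (Real.log c / d) = -Real.log c by field_simp]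
          rw [Real.exp_neg, Real.exp_log hcpos, one_div]
        rw [this]
        field_simp
      rw [hφ, if_neg (not_le.mpr hc1), hIsplit, h1, h2]
      rw [Real.rpow_def_of_pos hcpos, ← Real.exp_add]
      congr 1
      rw [hs₀def, hρ]
      ring
  refine ⟨by rw [← hIval]; exact htend, ?_, hgint.const_mul r⟩
  rw [hφ]
  split_ifs
  · exact Real.exp_pos _
  · exact mul_pos (Real.rpow_pos_of_pos hcpos _) (Real.exp_pos _)
end

section
/- Let r, d, ℓ > 0, set ρ = r/d and τ = min(r, d). For u₀ > 0 and t ≥ 0 let S(t, u₀) = exp( −r·∫₀ᵗ min(1, ℓ·u₀·e^{−d·s}) ds ) and let φ(u₀) = lim_{t→∞} S(t, u₀) (explicitly φ(u₀) = e^{−ℓρu₀} if ℓu₀ ≤ 1 and (ℓu₀)^{−ρ}e^{−ρ} if ℓu₀ > 1, so that 0 < φ(u₀) < 1). Then for all u₀ > 0 and all t ≥ 0: (1 − S(t, u₀))/(1 − φ(u₀)) ≥ 1 − e^{−τ·t}. Equivalently, the conditional distribution of the first jump time T of the companion process started at u₀, given that T is finite, is stochastically dominated by the exponential distribution of rate τ,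 uniformly in u₀. -/
open Filter Real

set_option maxHeartbeats 1000000

lemma exp_integral (c d a b : ℝ) (hd : d ≠ 0) :
    ∫ s in a..b, c * Real.exp (-d * s)
      = (c / d) * (Real.exp (-d * a) - Real.exp (-d * b)) := by
  have h : ∀ x : ℝ, HasDerivAt (fun s => -(c / d) * Real.exp (-d * s))
      (c * Real.exp (-d * x)) x := by
    intro x
    have h1 : HasDerivAt (fun s : ℝ => -d * s) (-d) x := by
      simpa using (hasDerivAt_id x).const_mul (-d)
    have h2 := (h1.exp).const_mul (-(c / d))
    refine h2.congr_deriv ?_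
    rw [show -(c / d) * (Real.exp (-d * x) * -d) = c * Real.exp (-d * x) * (d / d) by ring, div_self hd]
    ring
  rw [intervalIntegral.integral_eq_sub_of_hasDerivAt (fun x _ => h x)
    (by apply Continuous.intervalIntegrable; continuity)]
  ring

lemma convex_exp_bound (B y : ℝ) (hy0 : 0 ≤ y) (hy1 : y ≤ 1) :
    Real.exp (B * y) ≤ 1 - y + y * Real.exp B := by
  have := convexOn_exp.2 (Set.mem_univ (0 : ℝ)) (Set.mem_univ B)
    (by linarith : (0:ℝ) ≤ 1 - y) hy0 (by ring)
  simpa [smul_eq_mul, Real.exp_zero, mul_comm] using this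

lemma F_small (c d t : ℝ) (hd : 0 < d) (hc : 0 < c) (hc1 : c ≤ 1) (ht : 0 ≤ t) :
    ∫ s in (0:ℝ)..t, min 1 (c * Real.exp (-d * s))
      = (c / d) * (1 - Real.exp (-d * t)) := by
  have : ∫ s in (0:ℝ)..t, min 1 (c * Real.exp (-d * s))
      = ∫ s in (0:ℝ)..t, c * Real.exp (-d * s) := by
    apply intervalIntegral.integral_congr
    intro s hs
    rw [Set.uIcc_of_le ht] at hs
    have h1 : Real.exp (-d * s) ≤ 1 := by
      rw [← Real.exp_zero]
      apply Real.exp_le_exp.2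
      nlinarith [hs.1]
    have h2 : c * Real.exp (-d * s) ≤ 1 := by nlinarith [Real.exp_pos (-d*s)]
    exact min_eq_right h2
  rw [this, exp_integral c d 0 t hd.ne']
  simp

lemma min_eq_one_of_log (c d s : ℝ) (hc1 : 1 < c) (hs : d * s ≤ Real.log c) :
    min 1 (c * Real.exp (-d * s)) = 1 := by
  apply min_eq_left
  have h1 : Real.exp (-Real.log c) ≤ Real.exp (-d * s) := by
    apply Real.exp_le_exp.2; linarith
  rw [Real.exp_neg, Real.exp_log (by linarith : (0:ℝ) < c)] at h1
  calc (1:ℝ) = c * c⁻¹ := (mul_inv_cancel₀ (by linarith)).symm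
    _ ≤ c * Real.exp (-d * s) := by nlinarith

lemma F_one (c d t : ℝ) (hd : 0 < d) (hc1 : 1 < c) (ht0 : 0 ≤ t)
    (ht : t ≤ Real.log c / d) :
    ∫ s in (0:ℝ)..t, min 1 (c * Real.exp (-d * s)) = t := by
  have : ∫ s in (0:ℝ)..t, min 1 (c * Real.exp (-d * s))
      = ∫ s in (0:ℝ)..t, (1:ℝ) := by
    apply intervalIntegral.integral_congr
    intro s hs
    rw [Set.uIcc_of_le ht0] at hs
    have hsd : d * s ≤ Real.log c := by
      rw [le_div_iff₀ hd] at ht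
      nlinarith [hs.2]
    exact min_eq_one_of_log c d s hc1 hsd
  rw [this]; simp

lemma F_big (c d t : ℝ) (hd : 0 < d) (hc1 : 1 < c) (ht : Real.log c / d ≤ t) :
    ∫ s in (0:ℝ)..t, min 1 (c * Real.exp (-d * s))
      = Real.log c / d + (c / d) * (c⁻¹ - Real.exp (-d * t)) := by
  have hc0 : (0:ℝ) < c := by linarith
  have hlog : 0 ≤ Real.log c := Real.log_nonneg (by linarith)
  set T := Real.log c / d with hT
  have hT0 : 0 ≤ T := by positivity
  have hcont : Continuous (fun s => min 1 (c * Real.exp (-d * s))) := by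
    apply continuous_const.min; continuity
  have hsplit := intervalIntegral.integral_add_adjacent_intervals
    (a := (0:ℝ)) (b := T) (c := t)
    (hcont.intervalIntegrable (μ := MeasureTheory.volume) 0 T)
    (hcont.intervalIntegrable (μ := MeasureTheory.volume) T t)
  rw [← hsplit, F_one c d T hd hc1 hT0 le_rfl]
  have h2 : ∫ s in T..t, min 1 (c * Real.exp (-d * s))
      = ∫ s in T..t, c * Real.exp (-d * s) := by
    apply intervalIntegral.integral_congr
    intro s hs
    rw [Set.uIcc_of_le ht] at hs
    have h1 : Real.exp (-d * s) ≤ Real.exp (-d * T) := by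
      apply Real.exp_le_exp.2
      nlinarith [hs.1]
    have hTd : d * T = Real.log c := by rw [hT]; field_simp [mul_comm]
    rw [show -d * T = -(d*T) by ring, hTd, Real.exp_neg, Real.exp_log hc0] at h1
    have h2 : c * Real.exp (-d * s) ≤ 1 := by
      calc c * Real.exp (-d*s) ≤ c * c⁻¹ := by nlinarith
        _ = 1 := mul_inv_cancel₀ (ne_of_gt hc0)
    exact min_eq_right h2
  rw [h2, exp_integral c d T t hd.ne']
  have hTd : -d * T = -Real.log c := by rw [hT]; field_simp [mul_comm]
  rw [hTd, Real.exp_neg, Real.exp_log hc0]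

/-- the conditional law of the first jump time given it is finite
is stochastically dominated, uniformly in the initial condition, by an
exponential of rate `τ = min(r, d)`. -/
theorem conditional_waiting_time_uniform_domination
    (r d ℓ : ℝ) (hr : 0 < r) (hd : 0 < d) (hℓ : 0 < ℓ)
    (ρ τ : ℝ) (hρ : ρ = r / d) (hτ : τ = min r d)
    (S : ℝ → ℝ → ℝ)
    (hS : ∀ t u₀, S t u₀ =
      Real.exp (-r * ∫ s in (0 : ℝ)..t, min 1 (ℓ * u₀ * Real.exp (-d * s))))
    (φ : ℝ → ℝ)
    (hφ : ∀ u₀, φ u₀ = if ℓ * u₀ ≤ 1 then Real.exp (-(ℓ * ρ * u₀))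
      else (ℓ * u₀) ^ (-ρ) * Real.exp (-ρ)) :
    ∀ u₀ > (0 : ℝ),
      Filter.Tendsto (fun t => S t u₀) Filter.atTop (nhds (φ u₀)) ∧
      0 < φ u₀ ∧ φ u₀ < 1 ∧
      ∀ t ≥ (0 : ℝ), 1 - Real.exp (-τ * t) ≤ (1 - S t u₀) / (1 - φ u₀) := by
  intro u₀ hu₀
  have hc0 : 0 < ℓ * u₀ := mul_pos hℓ hu₀
  set c := ℓ * u₀ with hc
  have hτr : τ ≤ r := hτ ▸ min_le_left r d
  have hτd : τ ≤ d := hτ ▸ min_le_right r d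
  have hτ0 : 0 < τ := by rw [hτ]; exact lt_min hr hd
  have hρ0 : 0 < ρ := hρ ▸ div_pos hr hd
  have hexp0 : Filter.Tendsto (fun t : ℝ => Real.exp (-d * t)) Filter.atTop (nhds 0) := by
    have h1 : Filter.Tendsto (fun t : ℝ => -d * t) Filter.atTop Filter.atBot := by
      apply Filter.Tendsto.const_mul_atTop_of_neg (by linarith : -d < 0) Filter.tendsto_id
    exact Real.tendsto_exp_atBot.comp h1
  by_cases hcase : c ≤ 1
  · -- small initial condition
    have hφval : φ u₀ = Real.exp (-(ρ * c)) := by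
      rw [hφ u₀, if_pos (hc ▸ hcase)]
      congr 1; rw [hc]; ring
    have hSval : ∀ t, 0 ≤ t → S t u₀ = Real.exp (-(ρ * c) * (1 - Real.exp (-d * t))) := by
      intro t ht
      rw [hS t u₀, ← hc, F_small c d t hd hc0 hcase ht]
      congr 1; rw [hρ]; ring
    have hφ1 : φ u₀ < 1 := by
      rw [hφval]; apply Real.exp_lt_one_iff.2; nlinarith
    have hφpos : 0 < φ u₀ := hφval ▸ Real.exp_pos _
    refine ⟨?_, hφpos, hφ1, ?_⟩
    · rw [hφval]
      have h1 : Filter.Tendsto (fun t => Real.exp (-(ρ * c) * (1 - Real.exp (-d * t))))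
          Filter.atTop (nhds (Real.exp (-(ρ * c)))) := by
        have h2 := Real.continuous_exp.continuousAt.tendsto.comp
          ((hexp0.const_sub 1).const_mul (-(ρ * c)))
        simpa [Function.comp_def] using h2
      apply h1.congr'
      filter_upwards [Filter.eventually_ge_atTop 0] with t ht
      exact (hSval t ht).symm
    · intro t ht
      have hE1 : Real.exp (-τ * t) ≤ 1 := by
        apply Real.exp_le_one_iff.2; nlinarith
      have hEpos := Real.exp_pos (-τ * t)
      have hyE : Real.exp (-d * t) ≤ Real.exp (-τ * t) := by
        apply Real.exp_le_exp.2; nlinarith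
      have hy1 : Real.exp (-d * t) ≤ 1 := by
        apply Real.exp_le_one_iff.2; nlinarith
      have hypos := Real.exp_pos (-d * t)
      have hcb := convex_exp_bound (ρ * c) (Real.exp (-d * t)) hypos.le hy1
      have hsplit : S t u₀ = Real.exp (-(ρ * c)) * Real.exp ((ρ * c) * Real.exp (-d * t)) := by
        rw [hSval t ht, ← Real.exp_add]; ring_nf
      have hPP : Real.exp (-(ρ * c)) * Real.exp (ρ * c) = 1 := by
        rw [← Real.exp_add]; simp
      have hkey : S t u₀ ≤ φ u₀ + (1 - φ u₀) * Real.exp (-τ * t) := by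
        rw [hsplit, hφval]
        nlinarith [mul_le_mul_of_nonneg_left hcb (Real.exp_pos (-(ρ * c))).le,
          Real.exp_pos (-(ρ * c))]
      rw [le_div_iff₀ (by linarith : 0 < 1 - φ u₀)]
      nlinarith
  · -- large initial condition
    push_neg at hcase
    have hlog : 0 < Real.log c := Real.log_pos hcase
    set T := Real.log c / d with hT
    have hT0 : 0 < T := by positivity
    have hdT : d * T = Real.log c := by rw [hT]; field_simp [mul_comm]
    have hrT : r * T = ρ * Real.log c := by rw [hT, hρ]; ring
    have hφval : φ u₀ = Real.exp (-(r * T + ρ)) := by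
      rw [hφ u₀, if_neg (by rw [← hc]; linarith), ← hc,
        Real.rpow_def_of_pos hc0, ← Real.exp_add]
      congr 1
      rw [hrT]; ring
    have hφpos : 0 < φ u₀ := hφval ▸ Real.exp_pos _
    have hφ1 : φ u₀ < 1 := by
      rw [hφval]; apply Real.exp_lt_one_iff.2; nlinarith
    have hSval2 : ∀ t, T ≤ t →
        S t u₀ = Real.exp (-(r * T + ρ)) * Real.exp (ρ * (c * Real.exp (-d * t))) := by
      intro t ht
      rw [hS t u₀, ← hc, F_big c d t hd hcase (by rw [← hT]; exact ht), ← hT, ← Real.exp_add]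
      congr 1
      have hcc : c * c⁻¹ = 1 := mul_inv_cancel₀ hc0.ne'
      rw [hρ]
      field_simp
      nlinarith [hcc]
    refine ⟨?_, hφpos, hφ1, ?_⟩
    · rw [hφval]
      have h1 : Filter.Tendsto
          (fun t => Real.exp (-(r * T + ρ)) * Real.exp (ρ * (c * Real.exp (-d * t))))
          Filter.atTop (nhds (Real.exp (-(r * T + ρ)))) := by
        have h2 := Real.continuous_exp.continuousAt.tendsto.comp
          ((hexp0.const_mul c).const_mul ρ)
        have h3 := h2.const_mul (Real.exp (-(r * T + ρ)))
        simpa using h3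
      apply h1.congr'
      filter_upwards [Filter.eventually_ge_atTop T] with t ht
      exact (hSval2 t ht).symm
    · intro t ht
      have hE1 : Real.exp (-τ * t) ≤ 1 := by
        apply Real.exp_le_one_iff.2; nlinarith
      have hEpos := Real.exp_pos (-τ * t)
      rw [le_div_iff₀ (by linarith : 0 < 1 - φ u₀)]
      rcases le_or_gt t T with htT | htT
      · -- early phase : S t = exp (-r t) ≤ exp (-τ t)
        have hSv : S t u₀ = Real.exp (-r * t) := by
          rw [hS t u₀, ← hc, F_one c d t hd hcase ht (by rw [← hT]; exact htT)]
        have hSle : S t u₀ ≤ Real.exp (-τ * t) := by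
          rw [hSv]; apply Real.exp_le_exp.2; nlinarith
        nlinarith
      · -- late phase
        set x := c * Real.exp (-d * t) with hx
        have hxpos : 0 < x := mul_pos hc0 (Real.exp_pos _)
        have hx1 : x ≤ 1 := by
          have h1 : Real.exp (-d * t) ≤ Real.exp (-d * T) := by
            apply Real.exp_le_exp.2; nlinarith
          rw [show -d * T = -(d * T) by ring, hdT, Real.exp_neg,
            Real.exp_log (by linarith : (0:ℝ) < c)] at h1
          calc x ≤ c * c⁻¹ := by
                rw [hx]; exact mul_le_mul_of_nonneg_left h1 hc0.le
            _ = 1 := mul_inv_cancel₀ (by linarith)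
        have hcb := convex_exp_bound ρ x hxpos.le hx1
        have hSv := hSval2 t htT.le
        -- φ * exp ρ = exp (-r T)
        have hPP : Real.exp (-(r * T + ρ)) * Real.exp ρ = Real.exp (-(r * T)) := by
          rw [← Real.exp_add]; ring_nf
        -- claim 1 : x * exp (-(r T)) ≤ exp (-τ t)
        have hclaim1 : x * Real.exp (-(r * T)) ≤ Real.exp (-τ * t) := by
          have hxe : x = Real.exp (Real.log c - d * t) := by
            rw [hx, Real.exp_sub, Real.exp_log (by linarith : (0:ℝ) < c),
              show -d * t = -(d*t) by ring, Real.exp_neg, div_eq_mul_inv]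
          rw [hxe, ← Real.exp_add]
          apply Real.exp_le_exp.2
          -- log c - d t - r T ≤ -τ t, using log c = d T
          nlinarith [hdT]
        -- claim 2 : 1 - exp (-ρ) ≤ 1 - φ
        have hclaim2 : Real.exp (-(r * T + ρ)) ≤ Real.exp (-ρ) := by
          apply Real.exp_le_exp.2; nlinarith
        have hexpρ := Real.exp_pos ρ
        have hφe := Real.exp_pos (-(r * T + ρ))
        have heρ : Real.exp (-ρ) * Real.exp ρ = 1 := by
          rw [← Real.exp_add]; simp
        have heρ1 : Real.exp (-ρ) < 1 := Real.exp_lt_one_iff.2 (by linarith)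
        -- S ≤ φ (1 - x) + x exp(-rT) = φ + x exp(-rT)(1 - exp(-ρ))
        have hkey : S t u₀ ≤ φ u₀ + (1 - φ u₀) * Real.exp (-τ * t) := by
          rw [hSv, hφval]
          have hmul := mul_le_mul_of_nonneg_left hcb hφe.le
          have hprod : x * Real.exp (-(r * T)) * (1 - Real.exp (-ρ))
              ≤ Real.exp (-τ * t) * (1 - Real.exp (-(r * T + ρ))) := by
            apply mul_le_mul hclaim1 (by linarith) (by linarith) hEpos.le
          have hPQR : Real.exp (-(r * T + ρ))
              = Real.exp (-(r * T)) * Real.exp (-ρ) := by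
            rw [← Real.exp_add]; ring_nf
          nlinarith [hPP, hmul, hprod, hPQR]
        nlinarith [hkey]
end

section
/- Let r, d > 0, set ρ = r/d, and let t* ≥ 0. Then for all t ≥ t*: (1 − e^{−r·t*}·e^{−ρ·(1 − e^{−d·(t − t*)})}) / (1 − e^{−r·t*}·e^{−ρ}) ≥ 1 − ( ρ·e^{t*·(d − r)} / (1 − e^{−r·t*}·(1 − ρ)) )·e^{−d·t}. (Both denominators are strictly positive: 1 − e^{−r·t*}e^{−ρ} > 0 and 1 − e^{−r·t*}(1 − ρ) > 0.) -/
/-- comparison on `[t*, ∞)` between the conditional waiting-time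
CDF of the companion process and the mixture CDF. -/
theorem conditional_cdf_mixture_comparison
    (r d : ℝ) (hr : 0 < r) (hd : 0 < d)
    (ρ : ℝ) (hρ : ρ = r / d)
    (tstar : ℝ) (htstar : 0 ≤ tstar) :
    0 < 1 - Real.exp (-r * tstar) * Real.exp (-ρ) ∧
    0 < 1 - Real.exp (-r * tstar) * (1 - ρ) ∧
    ∀ t ≥ tstar,
      1 - (ρ * Real.exp (tstar * (d - r))
            / (1 - Real.exp (-r * tstar) * (1 - ρ))) * Real.exp (-d * t)
        ≤ (1 - Real.exp (-r * tstar)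
              * Real.exp (-ρ * (1 - Real.exp (-d * (t - tstar)))))
            / (1 - Real.exp (-r * tstar) * Real.exp (-ρ)) := by
  have hρ0 : 0 < ρ := by rw [hρ]; positivity
  set A := Real.exp (-r * tstar) with hA
  have hA0 : 0 < A := Real.exp_pos _
  have hA1 : A ≤ 1 := by
    rw [hA, show (1:ℝ) = Real.exp 0 by rw [Real.exp_zero]]
    exact Real.exp_le_exp.mpr (by nlinarith)
  set e := Real.exp (-ρ) with he
  have he0 : 0 < e := Real.exp_pos _
  have he1 : e < 1 := by
    rw [he, show (1:ℝ) = Real.exp 0 by rw [Real.exp_zero]]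
    exact Real.exp_lt_exp.mpr (by linarith)
  have heρ : 1 - ρ ≤ e := by
    have := Real.add_one_le_exp (-ρ); rw [← he] at this; linarith
  have hD1 : 0 < 1 - A * e := by nlinarith
  have hD2 : 0 < 1 - A * (1 - ρ) := by nlinarith [mul_le_mul_of_nonneg_left heρ hA0.le]
  refine ⟨hD1, hD2, ?_⟩
  intro t ht
  set u := Real.exp (-d * (t - tstar)) with hu
  have hu0 : 0 < u := Real.exp_pos _
  have hu1 : u ≤ 1 := by
    rw [hu, show (1:ℝ) = Real.exp 0 by rw [Real.exp_zero]]
    exact Real.exp_le_exp.mpr (by nlinarith)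
  have hid : Real.exp (tstar * (d - r)) * Real.exp (-d * t) = A * u := by
    rw [hA, hu, ← Real.exp_add, ← Real.exp_add]
    congr 1; ring
  have hid2 : ρ * Real.exp (tstar * (d - r)) / (1 - A * (1 - ρ)) * Real.exp (-d * t)
      = ρ * (A * u) / (1 - A * (1 - ρ)) := by
    rw [div_mul_eq_mul_div, mul_assoc, hid]
  rw [hid2]
  -- convexity of exp
  set E := Real.exp (-ρ * (1 - u)) with hE
  have hconv : E ≤ (1 - u) * e + u := by
    have h := convexOn_exp.2 (Set.mem_univ (-ρ)) (Set.mem_univ (0 : ℝ))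
      (by linarith : (0:ℝ) ≤ 1 - u) hu0.le (by ring)
    simp only [smul_eq_mul, mul_zero, add_zero, Real.exp_zero, mul_one] at h
    calc E = Real.exp ((1 - u) * (-ρ)) := by rw [hE]; congr 1; ring
    _ ≤ (1 - u) * e + u := by rw [he]; linarith
  have hrw : 1 - ρ * (A * u) / (1 - A * (1 - ρ))
      = ((1 - A * (1 - ρ)) - ρ * (A * u)) / (1 - A * (1 - ρ)) := by
    field_simp
  rw [hrw, div_le_div_iff₀ hD2 hD1]
  have h1 : 0 ≤ A * (1 - A * (1 - ρ)) * ((1 - u) * e + u - E) :=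
    mul_nonneg (mul_nonneg hA0.le hD2.le) (by linarith)
  have h2 : 0 ≤ A * u * ((e + ρ - 1) * (1 - A)) :=
    mul_nonneg (mul_nonneg hA0.le hu0.le)
      (mul_nonneg (by linarith) (by linarith))
  nlinarith [h1, h2]
end

section
/- Let r, d > 0, set ρ = r/d and τ = min(r, d). Then for all t ≥ 0 the denominator 1 − e^{−r·t}·(1 − ρ) is strictly positive and ρ·e^{−r·t} / (1 − e^{−r·t}·(1 − ρ)) ≤ e^{−τ·t}, that is, ρ·e^{−r·t}·e^{τ·t} ≤ 1 − e^{−r·t}·(1 − ρ). -/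
/-- Slope monotonicity of `exp` at `0`: for `0 < b ≤ a`,
`(e^b - 1)/b ≤ (e^a - 1)/a`. -/
lemma exp_slope_mono {b a : ℝ} (hb : 0 < b) (hba : b ≤ a) :
    (Real.exp b - 1) / b ≤ (Real.exp a - 1) / a := by
  have := convexOn_exp.secant_mono (a := 0) (x := b) (y := a)
    trivial trivial trivial (ne_of_gt hb) (ne_of_gt (hb.trans_le hba)) hba
  simpa [Real.exp_zero] using this

/-- final tail estimate
`ρ·e^{−r·t}/(1 − e^{−r·t}·(1 − ρ)) ≤ e^{−τ·t}` with `τ = min(r, d)`. -/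
theorem final_tail_estimate
    (r d : ℝ) (hr : 0 < r) (hd : 0 < d)
    (ρ τ : ℝ) (hρ : ρ = r / d) (hτ : τ = min r d) :
    ∀ t ≥ (0 : ℝ),
      0 < 1 - Real.exp (-r * t) * (1 - ρ) ∧
      ρ * Real.exp (-r * t) / (1 - Real.exp (-r * t) * (1 - ρ))
        ≤ Real.exp (-τ * t) ∧
      ρ * Real.exp (-r * t) * Real.exp (τ * t)
        ≤ 1 - Real.exp (-r * t) * (1 - ρ) := by
  intro t ht
  have hρpos : 0 < ρ := by rw [hρ]; positivity
  have hE1 : Real.exp (-r * t) ≤ 1 := by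
    apply Real.exp_le_one_iff.mpr
    nlinarith
  have hEpos : 0 < Real.exp (-r * t) := Real.exp_pos _
  -- positivity of denominator
  have hden : 0 < 1 - Real.exp (-r * t) * (1 - ρ) := by
    rcases le_or_gt ρ 1 with h1 | h1
    · nlinarith
    · nlinarith
  -- key inequality (third conjunct)
  have hkey : ρ * Real.exp (-r * t) * Real.exp (τ * t)
      ≤ 1 - Real.exp (-r * t) * (1 - ρ) := by
    rcases le_total r d with hrd | hdr
    · -- τ = r, ρ ≤ 1
      have hτr : τ = r := by rw [hτ, min_eq_left hrd]
      have hρ1 : ρ ≤ 1 := by rw [hρ]; exact div_le_one_of_le₀ hrd hd.le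
      rw [hτr, mul_assoc, ← Real.exp_add]
      have : -r * t + r * t = 0 := by ring
      rw [this, Real.exp_zero]
      nlinarith
    · -- τ = d, ρ ≥ 1
      have hτd : τ = d := by rw [hτ, min_eq_right hdr]
      rcases eq_or_lt_of_le ht with h0 | ht0
      · rw [← h0]; simp
      · have hslope := exp_slope_mono (mul_pos hd ht0) (mul_le_mul_of_nonneg_right hdr ht.le)
        -- ρ (e^{dt} - 1) ≤ e^{rt} - 1
        have hρe : ρ * (Real.exp (d * t) - 1) ≤ Real.exp (r * t) - 1 := by
          rw [hρ]
          rw [div_le_div_iff₀ (by positivity) (by positivity)] at hslope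
          rw [div_mul_eq_mul_div, div_le_iff₀ hd]
          nlinarith
        rw [hτd]
        have hmul : Real.exp (-r * t) * Real.exp (r * t) = 1 := by
          rw [← Real.exp_add]; norm_num
        have hmd : Real.exp (-r * t) * Real.exp (d * t) = Real.exp (-r * t) * Real.exp (d * t) := rfl
        nlinarith [Real.exp_pos (r * t), Real.exp_pos (d * t),
          mul_le_mul_of_nonneg_left hρe hEpos.le]
  refine ⟨hden, ?_, hkey⟩
  rw [div_le_iff₀ hden]
  calc ρ * Real.exp (-r * t)
      = ρ * Real.exp (-r * t) * Real.exp (τ * t) * Real.exp (-τ * t) := by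
        rw [mul_assoc, ← Real.exp_add]; simp
    _ ≤ (1 - Real.exp (-r * t) * (1 - ρ)) * Real.exp (-τ * t) := by
        exact mul_le_mul_of_nonneg_right hkey (Real.exp_pos _).le
    _ = Real.exp (-τ * t) * (1 - Real.exp (-r * t) * (1 - ρ)) := by ring
end
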